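/- arXiv:1202.4042 — 5 statements merged into one kernel-verified Lean document; each statement's English description precedes it below -/
import Mathlib

section
/- For all natural numbers n, k, m the identity of integers (n choose k) = (−1)^m · Σ_{i=0}^{n+m} (−1)^i · (i choose m) · ((n+m+1) choose (k+1+i)) holds (the sum may be taken over 0 ≤ i ≤ n+m, since all terms with k+1+i > n+m+1 vanish). -/
/-!
Induction on `m`. Splitting `C(N+1, k+1+i) = C(N, k+i) + C(N, k+1+i)` by Pascal's rule and
summing by parts turns the weight `C(i, m+1)` into its forward difference `C(i, m)` and `N+1` into
`N`, at the cost of a sign; for `m = 0` the sum telescopes to `C(n, k)`.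
-/

open Finset

theorem sum_range_succ_neg_one_pow_mul_choose {R : Type*} [CommRing R] (g : ℕ → R) (N k : ℕ) :
    ∑ i ∈ range (N + 1), (-1) ^ i * g i * ((N + 1).choose (k + 1 + i) : R) =
      g 0 * N.choose k - ∑ i ∈ range N, (-1) ^ i * (g (i + 1) - g i) * (N.choose (k + 1 + i) : R) := by
  have pascal (i : ℕ) : ((N + 1).choose (k + 1 + i) : R) = N.choose (k + i) + N.choose (k + 1 + i) := by
    rw [show k + 1 + i = k + i + 1 by omega, Nat.choose_succ_succ', Nat.cast_add]
  have top_vanishes : (N.choose (k + 1 + N) : R) = 0 := by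
    rw [Nat.choose_eq_zero_of_lt (by omega), Nat.cast_zero]
  simp_rw [pascal, mul_add, sum_add_distrib]
  rw [sum_range_succ', sum_range_succ, top_vanishes, mul_zero, add_zero, pow_zero, one_mul,
    add_zero, add_comm _ (g 0 * _), add_assoc, ← sum_add_distrib, sub_eq_add_neg, ← sum_neg_distrib]
  refine congrArg _ (sum_congr rfl fun i _ => ?_)
  rw [show k + (i + 1) = k + 1 + i by omega]
  ring

theorem sum_neg_one_pow_mul_choose_mul_choose (n k m : ℕ) :
    ∑ i ∈ range (n + m + 1), (-1) ^ i * (i.choose m : ℤ) * ((n + m + 1).choose (k + 1 + i) : ℤ) =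
      (-1) ^ m * n.choose k := by
  induction m with
  | zero => simpa using sum_range_succ_neg_one_pow_mul_choose (fun _ => (1 : ℤ)) n k
  | succ m ih =>
    rw [← add_assoc, sum_range_succ_neg_one_pow_mul_choose]
    simp only [Nat.choose_zero_succ, Nat.choose_succ_succ', Nat.cast_zero, Nat.cast_add,
      add_sub_cancel_right, zero_mul, zero_sub, ih, pow_succ]
    ring

/-- Proposition A.1(1): the binomial identity
`(n choose k) = (-1)^m * ∑_{i=0}^{n+m} (-1)^i * (i choose m) * ((n+m+1) choose (k+1+i))`,
as an identity of integers. -/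
theorem binomial_identity (n k m : ℕ) :
    (n.choose k : ℤ) =
      (-1) ^ m * ∑ i ∈ Finset.range (n + m + 1),
        (-1) ^ i * (i.choose m : ℤ) * ((n + m + 1).choose (k + 1 + i) : ℤ) := by
  rw [sum_neg_one_pow_mul_choose_mul_choose, ← mul_assoc, ← pow_add, Even.neg_one_pow ⟨m, rfl⟩,
    one_mul]
end

section
/- Let E be a finite-dimensional real inner product space, Δ ⊆ E a compact convex set with 0 in its interior, and Δ* = {y ∈ E : ⟨y, m⟩ ≥ −1 for all m ∈ Δ} its polar dual. Let σ = {(r·m, r) : m ∈ Δ, r ≥ 0} ⊆ E × ℝ be the cone over Δ × {1}. Then the dual cone of σ equals the cone over Δ* × {1}: {y ∈ E × ℝ : ⟨x, y⟩ ≥ 0 for all x ∈ σ} = {(r·n, r) : n ∈ Δ*, r ≥ 0}. -/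
/-!
Testing `(v, t)` against the generator `(m, 1)` of the cone over `Δ` shows that it lies in the
dual cone iff `⟪m, v⟫ + t ≥ 0` for all `m ∈ Δ`. Taking `m = 0` gives `t ≥ 0`. If `t > 0` this
says exactly that `t⁻¹ • v ∈ Δ*`. If `t = 0`, then `v` is nonnegative on a neighbourhood of `0`,
so `v = 0` and `(v, t)` is the apex of the cone over `Δ*`.
-/

open scoped RealInnerProductSpace Topology

section

variable {E : Type*} [NormedAddCommGroup E] [InnerProductSpace ℝ E]

def coneOver (S : Set E) : Set (E × ℝ) :=
  {p | ∃ m ∈ S, ∃ r : ℝ, 0 ≤ r ∧ p = (r • m, r)}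

lemma forall_coneOver_inner_add_mul_nonneg_iff {S : Set E} {v : E} {t : ℝ} :
    (∀ x ∈ coneOver S, 0 ≤ ⟪x.1, v⟫ + x.2 * t) ↔ ∀ m ∈ S, 0 ≤ ⟪m, v⟫ + t := by
  constructor
  · intro h m hm
    simpa using h (m, 1) ⟨m, hm, 1, zero_le_one, by simp⟩
  · rintro h _ ⟨m, hm, r, hr, rfl⟩
    have hscaled : ⟪r • m, v⟫ + r * t = r * (⟪m, v⟫ + t) := by
      rw [real_inner_smul_left]; ring
    rw [hscaled]
    exact mul_nonneg hr (h m hm)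

lemma eq_zero_of_forall_mem_nhds_inner_nonneg {S : Set E} (hS : S ∈ 𝓝 0) {v : E}
    (h : ∀ m ∈ S, 0 ≤ ⟪m, v⟫) : v = 0 := by
  have hsmall : ∀ᶠ ε : ℝ in 𝓝[>] 0, -(ε • v) ∈ S := by
    have hcont : Filter.Tendsto (fun ε : ℝ => -(ε • v)) (𝓝 0) (𝓝 0) :=
      (by fun_prop : Continuous fun ε : ℝ => -(ε • v)).tendsto' 0 0 (by simp)
    exact (hcont.eventually hS).filter_mono nhdsWithin_le_nhds
  obtain ⟨ε, hmem, hε⟩ := (hsmall.and self_mem_nhdsWithin).exists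
  have hneg : 0 ≤ -(ε * ⟪v, v⟫) := by
    simpa [inner_neg_left, real_inner_smul_left] using h _ hmem
  exact real_inner_self_nonpos.mp (by nlinarith [hε])

lemma mem_coneOver_polar_iff {S : Set E} (hS : S ∈ 𝓝 0) {v : E} {t : ℝ} :
    (v, t) ∈ coneOver {y | ∀ m ∈ S, -1 ≤ ⟪y, m⟫} ↔ ∀ m ∈ S, 0 ≤ ⟪m, v⟫ + t := by
  constructor
  · rintro ⟨n, hn, r, hr, hvt⟩
    rw [Prod.mk.injEq] at hvt
    rw [hvt.1, hvt.2]
    intro m hm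
    have hscaled : ⟪m, r • n⟫ + r = r * (⟪n, m⟫ + 1) := by
      rw [real_inner_smul_right, real_inner_comm]; ring
    rw [hscaled]
    exact mul_nonneg hr (by linarith [hn m hm])
  · intro h
    have ht : 0 ≤ t := by simpa using h 0 (mem_of_mem_nhds hS)
    rcases ht.eq_or_lt with rfl | htpos
    · have hv : v = 0 := eq_zero_of_forall_mem_nhds_inner_nonneg hS (by simpa using h)
      exact ⟨0, fun m _ => by simp, 0, le_rfl, by simp [hv]⟩
    · refine ⟨t⁻¹ • v, fun m hm => ?_, t, ht, by simp [smul_smul, htpos.ne']⟩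
      have hscaled : ⟪t⁻¹ • v, m⟫ + 1 = t⁻¹ * (⟪m, v⟫ + t) := by
        rw [real_inner_smul_left, real_inner_comm]; field_simp
      linarith [mul_nonneg (inv_nonneg.mpr ht) (h m hm)]

end

theorem dual_cone_over_polytope_eq_cone_over_polar_general
    {E : Type*} [NormedAddCommGroup E] [InnerProductSpace ℝ E]
    (Δ : Set E)
    (h0 : (0 : E) ∈ interior Δ) :
    {y : E × ℝ | ∀ x ∈ {p : E × ℝ | ∃ m ∈ Δ, ∃ r : ℝ, 0 ≤ r ∧ p = (r • m, r)},
        0 ≤ ⟪x.1, y.1⟫ + x.2 * y.2} =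
      {p : E × ℝ | ∃ n ∈ {y : E | ∀ m ∈ Δ, -1 ≤ ⟪y, m⟫}, ∃ r : ℝ, 0 ≤ r ∧ p = (r • n, r)} := by
  ext ⟨v, t⟩
  exact forall_coneOver_inner_add_mul_nonneg_iff.trans
    (mem_coneOver_polar_iff (mem_interior_iff_mem_nhds.mp h0)).symm

/-- Example 1.5: for a compact convex set `Δ ⊆ E` with `0` in its interior and polar dual
`Δ* = {y : ⟨y, m⟩ ≥ -1 for all m ∈ Δ}`, the dual of the cone
`σ = {(r•m, r) : m ∈ Δ, r ≥ 0} ⊆ E × ℝ` equals the cone over `Δ* × {1}`: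
`Cone(Δ)∨ = Cone(Δ*)`. Here `E × ℝ` carries the product inner product. -/
theorem dual_cone_over_polytope_eq_cone_over_polar
    {E : Type*} [NormedAddCommGroup E] [InnerProductSpace ℝ E] [FiniteDimensional ℝ E]
    (Δ : Set E) (hcompact : IsCompact Δ) (hconv : Convex ℝ Δ)
    (h0 : (0 : E) ∈ interior Δ) :
    {y : E × ℝ | ∀ x ∈ {p : E × ℝ | ∃ m ∈ Δ, ∃ r : ℝ, 0 ≤ r ∧ p = (r • m, r)},
        0 ≤ ⟪x.1, y.1⟫ + x.2 * y.2} =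
      {p : E × ℝ | ∃ n ∈ {y : E | ∀ m ∈ Δ, -1 ≤ ⟪y, m⟫}, ∃ r : ℝ, 0 ≤ r ∧ p = (r • n, r)} :=
  dual_cone_over_polytope_eq_cone_over_polar_general Δ h0
end

section
/- Let Δ ⊂ ℝ^n be the convex hull of a finite set of points of ℤ^n and assume Δ has nonempty interior. Let σ = {(r·m, r) : m ∈ Δ, r ≥ 0} ⊆ ℝ^{n+1} and let σ∨ = {y ∈ ℝ^{n+1} : ⟨x, y⟩ ≥ 0 for all x ∈ σ} be its dual cone. Then for every lattice point m ∈ Δ ∩ ℤ^n: m lies in the interior of Δ if and only if ⟨ȳ, (m,1)⟩ ≥ 1 for every nonzero lattice point ȳ ∈ σ∨ ∩ ℤ^{n+1}. (Equivalently, the function h'_*(m) = −inf of ⟨·,(m,1)⟩ over the nonzero lattice points of σ∨ takes the value 0 at boundary lattice points of Δ and −1 at interior lattice points of Δ.) -/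
/-!
If `m` is interior and `y` is a nonzero lattice point of `σ∨`, the affine function
`x ↦ ⟨x, y₁⟩ + y₂` is nonnegative on `Δ` and takes an integer value at `m`. That value cannot be
`0`: an affine function attaining its minimum at an interior point has zero linear part, which
would force `y = 0`. Hence it is at least `1`.

If `m` is not interior, Hahn–Banach gives a real supporting hyperplane of `Δ` at `m`. Since the
points spanning `Δ` and `m` are rational, the normal can be made rational: the constraints that are
tight at the real normal cut out a subspace defined over `ℚ`, whose rational points are dense
in it, and a nearby rational point keeps the other constraints strict. Clearing denominators gives
a lattice point `y ∈ σ∨` with `⟨y, (m,1)⟩ = 0`.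
-/

open Set Filter Topology Finset

section

variable {ι : Type*}

def vectorsOver (K : Subfield ℝ) : Set (ι → ℝ) := {x | ∀ i, x i ∈ K}

lemma dense_vectorsOver (K : Subfield ℝ) : Dense (vectorsOver K : Set (ι → ℝ)) := by
  have hK : Dense (K : Set ℝ) :=
    Rat.denseRange_cast.mono (range_subset_iff.2 fun q => SubfieldClass.ratCast_mem K q)
  simpa [vectorsOver, Set.pi] using dense_pi univ fun (_ : ι) _ => hK

variable {K : Subfield ℝ}

lemma intCast_mem_vectorsOver (v : ι → ℤ) : (fun i => (v i : ℝ)) ∈ vectorsOver K :=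
  fun i => intCast_mem K (v i)

variable [Fintype ι]

def dotOrthogonal (W : Finset (ι → ℝ)) : Set (ι → ℝ) := {x | ∀ w ∈ W, w ⬝ᵥ x = 0}

lemma dotProduct_mem_of_mem_vectorsOver {x y : ι → ℝ} (hx : x ∈ vectorsOver K)
    (hy : y ∈ vectorsOver K) : x ⬝ᵥ y ∈ K :=
  sum_mem fun i _ => mul_mem (hx i) (hy i)

theorem dotOrthogonal_subset_closure (W : Finset (ι → ℝ)) (hW : ∀ w ∈ W, w ∈ vectorsOver K) :
    dotOrthogonal W ⊆ closure (vectorsOver K ∩ dotOrthogonal W) := by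
  classical
  induction W using Finset.induction_on with
  | empty => simp [dotOrthogonal, (dense_vectorsOver K).closure_eq]
  | insert w W _ ih =>
    intro a ha
    have hwK := hW w (mem_insert_self w W)
    have haW : a ∈ closure (vectorsOver K ∩ dotOrthogonal W) :=
      ih (fun w' hw' => hW w' (mem_insert_of_mem hw')) fun w' hw' => ha w' (mem_insert_of_mem hw')
    by_cases hd : ∃ d ∈ vectorsOver K ∩ dotOrthogonal W, w ⬝ᵥ d ≠ 0
    · obtain ⟨d, ⟨hdK, hdW⟩, hwd⟩ := hd
      -- Projecting along `d` onto `w⊥` fixes `a` and maps `K`-points of `W⊥` into `(insert w W)⊥`.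
      let P : (ι → ℝ) → (ι → ℝ) := fun x => x - (w ⬝ᵥ x / w ⬝ᵥ d) • d
      have hPa : P a = a := by simp [P, ha w (mem_insert_self w W)]
      rw [← hPa]
      refine map_mem_closure (by fun_prop) haW ?_
      rintro x ⟨hxK, hxW⟩
      refine ⟨fun i => sub_mem (hxK i) (mul_mem (div_mem (dotProduct_mem_of_mem_vectorsOver hwK hxK)
        (dotProduct_mem_of_mem_vectorsOver hwK hdK)) (hdK i)), fun w' hw' => ?_⟩
      rcases mem_insert.1 hw' with rfl | hw'
      · simp [P, dotProduct_sub, dotProduct_smul, hwd]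
      · simp [P, dotProduct_sub, dotProduct_smul, hxW w' hw', hdW w' hw']
    · push Not at hd
      refine closure_mono ?_ haW
      rintro x ⟨hxK, hxW⟩
      refine ⟨hxK, fun w' hw' => ?_⟩
      rcases mem_insert.1 hw' with rfl | hw'
      exacts [hd x ⟨hxK, hxW⟩, hxW w' hw']

theorem exists_mem_vectorsOver_ne_zero_dotProduct_nonneg (T : Finset (ι → ℝ))
    (hT : ∀ t ∈ T, t ∈ vectorsOver K) {a : ι → ℝ} (ha : a ≠ 0) (haT : ∀ t ∈ T, 0 ≤ t ⬝ᵥ a) :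
    ∃ q ∈ vectorsOver K, q ≠ 0 ∧ ∀ t ∈ T, 0 ≤ t ⬝ᵥ q := by
  classical
  let I := T.filter fun t => t ⬝ᵥ a = 0
  let U := {x : ι → ℝ | x ≠ 0} ∩ ⋂ t ∈ T.filter (fun t => t ⬝ᵥ a ≠ 0), {x | 0 < t ⬝ᵥ x}
  have hU : IsOpen U :=
    isOpen_ne.inter (isOpen_biInter_finset fun t _ => isOpen_lt continuous_const (by fun_prop))
  have haU : a ∈ U := ⟨ha, mem_iInter₂.2 fun t ht =>
    (haT t (mem_filter.1 ht).1).lt_of_ne (mem_filter.1 ht).2.symm⟩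
  have haI : a ∈ dotOrthogonal I := fun t ht => (mem_filter.1 ht).2
  obtain ⟨q, hqU, hqK, hqI⟩ := mem_closure_iff.1
    (dotOrthogonal_subset_closure I (fun t ht => hT t (mem_filter.1 ht).1) haI) U hU haU
  refine ⟨q, hqK, hqU.1, fun t ht => ?_⟩
  by_cases hta : t ⬝ᵥ a = 0
  · exact (hqI t (mem_filter.2 ⟨ht, hta⟩)).ge
  · exact (mem_iInter₂.1 hqU.2 t (mem_filter.2 ⟨ht, hta⟩)).le

lemma exists_pos_nat_mul_eq_intCast (z : ι → ℚ) :
    ∃ N : ℕ, 0 < N ∧ ∃ b : ι → ℤ, ∀ i, (N : ℚ) * z i = b i := by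
  have hdvd : ∀ i, ((z i).den : ℤ) ∣ ∏ j, ((z j).den : ℤ) := fun i => dvd_prod_of_mem _ (mem_univ i)
  choose c hc using hdvd
  refine ⟨∏ i, (z i).den, prod_pos fun i _ => (z i).den_pos, fun i => c i * (z i).num, fun i => ?_⟩
  have := congrArg (Int.cast : ℤ → ℚ) (hc i)
  push_cast at this ⊢
  rw [this, mul_right_comm, Rat.den_mul_eq_num, mul_comm]

theorem exists_int_ne_zero_dotProduct_nonneg (T : Finset (ι → ℝ))
    (hT : ∀ t ∈ T, t ∈ vectorsOver (Rat.castHom ℝ).fieldRange) {a : ι → ℝ} (ha : a ≠ 0)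
    (haT : ∀ t ∈ T, 0 ≤ t ⬝ᵥ a) :
    ∃ b : ι → ℤ, b ≠ 0 ∧ ∀ t ∈ T, 0 ≤ t ⬝ᵥ fun i => (b i : ℝ) := by
  obtain ⟨q, hqQ, hq0, hqT⟩ := exists_mem_vectorsOver_ne_zero_dotProduct_nonneg T hT ha haT
  choose z hz using hqQ
  obtain ⟨N, hN, b, hb⟩ := exists_pos_nat_mul_eq_intCast z
  have hbq : (fun i => (b i : ℝ)) = (N : ℝ) • q := funext fun i => by
    have := congrArg (Rat.cast : ℚ → ℝ) (hb i)
    push_cast at this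
    rw [Pi.smul_apply, ← hz i, smul_eq_mul, Rat.coe_castHom, this]
  refine ⟨b, ?_, fun t ht => ?_⟩
  · rintro rfl
    have h0 : (N : ℝ) • q = 0 := by rw [← hbq]; ext; simp
    exact hq0 ((smul_eq_zero.1 h0).resolve_left (by positivity))
  · rw [hbq, dotProduct_smul]
    exact smul_nonneg N.cast_nonneg (hqT t ht)

theorem eq_zero_of_dotProduct_le_of_mem_interior {Δ : Set (ι → ℝ)} {x₀ v : ι → ℝ}
    (hx₀ : x₀ ∈ interior Δ) (h : ∀ x ∈ Δ, x₀ ⬝ᵥ v ≤ x ⬝ᵥ v) : v = 0 := by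
  have hline : Tendsto (fun t : ℝ => x₀ - t • v) (𝓝 0) (𝓝 x₀) := by
    have : Continuous fun t : ℝ => x₀ - t • v := by fun_prop
    simpa using this.tendsto 0
  have hev : ∀ᶠ t in 𝓝[>] (0 : ℝ), x₀ - t • v ∈ Δ :=
    nhdsWithin_le_nhds (hline.eventually_mem (mem_interior_iff_mem_nhds.1 hx₀))
  obtain ⟨t, htΔ, ht⟩ := (hev.and self_mem_nhdsWithin).exists
  have hle := h _ htΔ
  rw [sub_dotProduct, smul_dotProduct, smul_eq_mul] at hle
  have hvv : v ⬝ᵥ v ≤ 0 := by nlinarith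
  exact dotProduct_self_eq_zero.1 (hvv.antisymm (sum_nonneg fun i _ => mul_self_nonneg (v i)))

theorem exists_dotProduct_le_of_notMem_interior {A : Set (ι → ℝ)} (hA : Convex ℝ A)
    (hAint : (interior A).Nonempty) {x₀ : ι → ℝ} (hx₀ : x₀ ∉ interior A) :
    ∃ a ≠ 0, ∀ x ∈ A, x₀ ⬝ᵥ a ≤ x ⬝ᵥ a := by
  classical
  obtain ⟨f, hf0, hf⟩ := geometric_hahn_banach_of_nonempty_interior_point hA hx₀ hAint
  set a := (dotProductEquiv ℝ ι).symm f.toLinearMap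
  have hfa : ∀ x, f x = a ⬝ᵥ x := fun x => by
    rw [← dotProductEquiv_apply_apply, LinearEquiv.apply_symm_apply]; rfl
  refine ⟨-a, ?_, fun x hx => ?_⟩
  · intro ha
    apply hf0
    ext x
    simp [hfa, neg_eq_zero.1 ha]
  · simpa [hfa, dotProduct_comm] using hf x hx

theorem exists_int_dotProduct_le_of_notMem_interior (S : Finset (ι → ℝ))
    (hS : ∀ s ∈ S, s ∈ vectorsOver (Rat.castHom ℝ).fieldRange) {x₀ : ι → ℝ}
    (hx₀rat : x₀ ∈ vectorsOver (Rat.castHom ℝ).fieldRange)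
    (hint : (interior (convexHull ℝ (S : Set (ι → ℝ)))).Nonempty)
    (hx₀ : x₀ ∉ interior (convexHull ℝ (S : Set (ι → ℝ)))) :
    ∃ b : ι → ℤ, b ≠ 0 ∧ ∀ x ∈ convexHull ℝ (S : Set (ι → ℝ)),
      x₀ ⬝ᵥ (fun i => (b i : ℝ)) ≤ x ⬝ᵥ fun i => (b i : ℝ) := by
  classical
  obtain ⟨a, ha0, ha⟩ := exists_dotProduct_le_of_notMem_interior (convex_convexHull ℝ _) hint hx₀
  obtain ⟨b, hb0, hb⟩ := exists_int_ne_zero_dotProduct_nonneg (S.image (· - x₀))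
    (Finset.forall_mem_image.2 fun s hs i => sub_mem (hS s hs i) (hx₀rat i)) ha0
    (by simpa [sub_dotProduct] using fun s hs => ha s (subset_convexHull ℝ _ hs))
  refine ⟨b, hb0, fun x hx => convexHull_min (t := {x | x₀ ⬝ᵥ _ ≤ x ⬝ᵥ _}) ?_ ?_ hx⟩
  · intro s hs
    simpa [sub_dotProduct] using hb (s - x₀) (mem_image_of_mem _ hs)
  · exact convex_halfSpace_ge ⟨fun x y => add_dotProduct x y _, fun c x => smul_dotProduct c x _⟩ _

theorem one_le_dotProduct_add_of_mem_interior {Δ : Set (ι → ℝ)} {m v : ι → ℤ} {c : ℤ}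
    (hm : (fun i => (m i : ℝ)) ∈ interior Δ) (hvc : ((fun i => (v i : ℝ)), (c : ℝ)) ≠ 0)
    (h : ∀ x ∈ Δ, 0 ≤ x ⬝ᵥ (fun i => (v i : ℝ)) + c) :
    1 ≤ (fun i => (v i : ℝ)) ⬝ᵥ (fun i => (m i : ℝ)) + c := by
  have hcast : (fun i => (v i : ℝ)) ⬝ᵥ (fun i => (m i : ℝ)) + c = ((v ⬝ᵥ m + c : ℤ) : ℝ) := by
    push_cast [dotProduct]
    rfl
  have hnonneg := h _ (interior_subset hm)
  rw [dotProduct_comm] at hnonneg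
  have hne : (fun i => (v i : ℝ)) ⬝ᵥ (fun i => (m i : ℝ)) + c ≠ 0 := by
    intro h0
    rw [dotProduct_comm] at h0
    have hv : (fun i => (v i : ℝ)) = 0 :=
      eq_zero_of_dotProduct_le_of_mem_interior hm fun x hx => by linarith [h x hx]
    exact hvc (Prod.ext hv (by simpa [hv] using h0))
  rw [hcast] at hnonneg hne ⊢
  have : 0 < v ⬝ᵥ m + c := by exact_mod_cast hnonneg.lt_of_ne' hne
  exact_mod_cast this

theorem forall_mem_cone_dotProduct_nonneg_iff {Δ : Set (ι → ℝ)} (y : (ι → ℝ) × ℝ) :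
    (∀ x ∈ {p : (ι → ℝ) × ℝ | ∃ m ∈ Δ, ∃ r : ℝ, 0 ≤ r ∧ p = (r • m, r)},
      0 ≤ x.1 ⬝ᵥ y.1 + x.2 * y.2) ↔ ∀ x ∈ Δ, 0 ≤ x ⬝ᵥ y.1 + y.2 := by
  constructor
  · intro h x hx
    simpa using h (x, 1) ⟨x, hx, 1, zero_le_one, by simp⟩
  · rintro h _ ⟨x, hx, r, hr, rfl⟩
    simpa [smul_dotProduct, mul_add] using mul_nonneg hr (h x hx)

end

theorem interior_lattice_point_iff_pairing_ge_one_general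
    {n : ℕ} (S : Finset (Fin n → ℤ))
    (Δ : Set (Fin n → ℝ))
    (hΔ : Δ = convexHull ℝ ((fun v : Fin n → ℤ => fun j => (v j : ℝ)) '' (S : Set (Fin n → ℤ))))
    (hint : (interior Δ).Nonempty)
    (σ : Set ((Fin n → ℝ) × ℝ))
    (hσ : σ = {p | ∃ m ∈ Δ, ∃ r : ℝ, 0 ≤ r ∧ p = (r • m, r)})
    (m : Fin n → ℤ) :
    ((fun j => (m j : ℝ)) ∈ interior Δ) ↔
      ∀ y : (Fin n → ℝ) × ℝ,
        (∀ x ∈ σ, 0 ≤ (∑ j, x.1 j * y.1 j) + x.2 * y.2) →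
        (∀ j, ∃ z : ℤ, y.1 j = (z : ℝ)) → (∃ z : ℤ, y.2 = (z : ℝ)) →
        y ≠ 0 →
        1 ≤ (∑ j, y.1 j * (m j : ℝ)) + y.2 := by
  subst hΔ hσ
  constructor
  · rintro hm ⟨y₁, y₂⟩ hy hv ⟨c, rfl⟩ hy0
    choose v hv using hv
    obtain rfl : y₁ = fun j => (v j : ℝ) := funext hv
    exact one_le_dotProduct_add_of_mem_interior hm hy0
      ((forall_mem_cone_dotProduct_nonneg_iff _).1 hy)
  · intro H
    by_contra hm
    set mR : Fin n → ℝ := fun j => (m j : ℝ)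
    obtain ⟨b, hb0, hb⟩ := exists_int_dotProduct_le_of_notMem_interior
      (S.image fun v j => (v j : ℝ)) (Finset.forall_mem_image.2 fun v _ => intCast_mem_vectorsOver v)
      (intCast_mem_vectorsOver m) (by rwa [coe_image]) (by rwa [coe_image])
    set bR : Fin n → ℝ := fun j => (b j : ℝ)
    rw [coe_image] at hb
    have := H (bR, -(mR ⬝ᵥ bR)) ((forall_mem_cone_dotProduct_nonneg_iff _).2 fun x hx => by
        simpa using hb x hx)
      (fun j => ⟨b j, rfl⟩) ⟨-(m ⬝ᵥ b), by push_cast [dotProduct]; rfl⟩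
      (fun h => hb0 <| funext fun j => by simpa [bR] using congrFun (Prod.mk_eq_zero.1 h).1 j)
    change 1 ≤ bR ⬝ᵥ mR + -(mR ⬝ᵥ bR) at this
    rw [dotProduct_comm] at this
    linarith

/-- The lattice-point evaluation underlying Lemma 1.14(1): for a lattice polytope
`Δ ⊂ ℝ^n` with nonempty interior and `σ ⊆ ℝ^{n+1}` the cone over `Δ × {1}` with dual cone
`σ∨`, a lattice point `m ∈ Δ ∩ ℤ^n` lies in the interior of `Δ` if and only if
`⟨ȳ, (m,1)⟩ ≥ 1` for every nonzero lattice point `ȳ ∈ σ∨`. -/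
theorem interior_lattice_point_iff_pairing_ge_one
    {n : ℕ} (S : Finset (Fin n → ℤ))
    (Δ : Set (Fin n → ℝ))
    (hΔ : Δ = convexHull ℝ ((fun v : Fin n → ℤ => fun j => (v j : ℝ)) '' (S : Set (Fin n → ℤ))))
    (hint : (interior Δ).Nonempty)
    (σ : Set ((Fin n → ℝ) × ℝ))
    (hσ : σ = {p | ∃ m ∈ Δ, ∃ r : ℝ, 0 ≤ r ∧ p = (r • m, r)})
    (m : Fin n → ℤ) (hm : (fun j => (m j : ℝ)) ∈ Δ) :
    ((fun j => (m j : ℝ)) ∈ interior Δ) ↔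
      ∀ y : (Fin n → ℝ) × ℝ,
        (∀ x ∈ σ, 0 ≤ (∑ j, x.1 j * y.1 j) + x.2 * y.2) →
        (∀ j, ∃ z : ℤ, y.1 j = (z : ℝ)) → (∃ z : ℤ, y.2 = (z : ℝ)) →
        y ≠ 0 →
        1 ≤ (∑ j, y.1 j * (m j : ℝ)) + y.2 :=
  interior_lattice_point_iff_pairing_ge_one_general S Δ hΔ hint σ hσ m
end

section
/- Let v_1, …, v_k ∈ ℤ^n (k ≥ 1) be vectors that are part of a ℤ-basis of ℤ^n, and let σ = {Σ_{i=1}^k λ_i · v_i : λ_i ≥ 0} ⊆ ℝ^n be the cone they generate. Then the convex hull of the nonzero lattice points of σ is given by convexHull( (σ ∩ ℤ^n) \ {0} ) = {Σ_{i=1}^k λ_i · v_i : λ_i ≥ 0 for all i and Σ_{i=1}^k λ_i ≥ 1}. -/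
/-!
Because the `vᵢ` extend to a `ℤ`-basis, the real coordinates along the `vᵢ` of a lattice point
of `σ` are its (integral) coordinates in that basis; a nonzero lattice point of `σ` thus has a
coordinate `≥ 1`, and the convex right-hand side contains the hull. Conversely a point of the
right-hand side is `s • u` with `s ≥ 1` and `u` in the simplex spanned by the `vᵢ`; both `u` and
`⌈s⌉₊ • u` lie in the hull of the lattice points `N • vᵢ`, and `s • u` lies between them.
-/

namespace Module.Basis

variable {ι : Type*} [Fintype ι] [DecidableEq ι] (b : Basis ι ℤ (ι → ℤ))

theorem linearIndependent_intCast :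
    LinearIndependent ℝ fun t j => (b t j : ℝ) := by
  let M := (Pi.basisFun ℤ ι).toMatrix b
  let := (Pi.basisFun ℤ ι).invertibleToMatrix b
  let := Invertible.map (Int.castRingHom ℝ).mapMatrix M
  have hcols : (fun t j => (b t j : ℝ)) = ((Int.castRingHom ℝ).mapMatrix M).col := by
    ext t j
    simp [M, toMatrix_apply]
  rw [hcols]
  exact Matrix.linearIndependent_cols_of_invertible _

noncomputable def castReal : Basis ι ℝ (ι → ℝ) :=
  basisOfLinearIndependentOfCardEqFinrank' _ b.linearIndependent_intCast (by simp)

@[simp]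
theorem castReal_apply (t : ι) : b.castReal t = fun j => (b t j : ℝ) := by
  simp [castReal, basisOfLinearIndependentOfCardEqFinrank']

theorem castReal_repr_intCast (z : ι → ℤ) (t : ι) :
    b.castReal.repr (fun j => (z j : ℝ)) t = b.repr z t := by
  have hz : (fun j => (z j : ℝ)) = ∑ s, (b.repr z s : ℝ) • b.castReal s := by
    ext j
    conv_lhs => rw [← b.sum_repr z]
    simp
  rw [hz, repr_sum_self]

theorem coeff_eq_repr_of_sum_smul_eq_intCast {κ : Type*} [Fintype κ] (f : κ ↪ ι)
    {lam : κ → ℝ} {z : ι → ℤ}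
    (h : ∑ i, lam i • (fun j => (b (f i) j : ℝ)) = fun j => (z j : ℝ)) (i : κ) :
    lam i = b.repr z (f i) := by
  classical
  simp_rw [← b.castReal_apply] at h
  rw [← b.castReal_repr_intCast, ← h]
  simp [-castReal_apply, Finsupp.single_apply, f.injective.eq_iff]

end Module.Basis

section Cone

variable {E : Type*} [AddCommGroup E] [Module ℝ E]

theorem Convex.smul_mem_of_forall_natCast_smul_mem {C : Set E} (hC : Convex ℝ C) {u : E}
    (h : ∀ N : ℕ, 1 ≤ N → (N : ℝ) • u ∈ C) {s : ℝ} (hs : 1 ≤ s) : s • u ∈ C := by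
  have hI : ((fun r : ℝ => r • u) ⁻¹' C).OrdConnected :=
    (hC.linear_preimage (LinearMap.id.smulRight u)).ordConnected
  have h1 : (1 : ℝ) • u ∈ C := by exact_mod_cast h 1 le_rfl
  exact hI.out h1 (h ⌈s⌉₊ (Nat.one_le_iff_ne_zero.2 (by positivity))) ⟨hs, Nat.le_ceil s⟩

variable {κ : Type*} [Fintype κ]

def nonnegCombinations (w : κ → E) : Set E :=
  {x | ∃ lam : κ → ℝ, (∀ i, 0 ≤ lam i) ∧ x = ∑ i, lam i • w i}

def nonnegCombinationsOneLe (w : κ → E) : Set E :=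
  {x | ∃ lam : κ → ℝ, (∀ i, 0 ≤ lam i) ∧ 1 ≤ ∑ i, lam i ∧ x = ∑ i, lam i • w i}

theorem convex_nonnegCombinationsOneLe (w : κ → E) : Convex ℝ (nonnegCombinationsOneLe w) := by
  rintro _ ⟨p, hp0, hp1, rfl⟩ _ ⟨q, hq0, hq1, rfl⟩ a c ha hc hac
  refine ⟨a • p + c • q, fun i => add_nonneg (mul_nonneg ha (hp0 i)) (mul_nonneg hc (hq0 i)),
    ?_, ?_⟩
  · simp only [Pi.add_apply, Pi.smul_apply, smul_eq_mul, Finset.sum_add_distrib,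
      ← Finset.mul_sum]
    nlinarith
  · simp only [Finset.smul_sum, smul_smul, Pi.add_apply, Pi.smul_apply, smul_eq_mul, add_smul,
      Finset.sum_add_distrib]

theorem nonnegCombinationsOneLe_subset_convexHull {w : κ → E} {T : Set E}
    (hT : ∀ N : ℕ, 1 ≤ N → ∀ i, (N : ℝ) • w i ∈ T) :
    nonnegCombinationsOneLe w ⊆ convexHull ℝ T := by
  rintro _ ⟨lam, hlam0, hs, rfl⟩
  set s := ∑ i, lam i
  have hs0 : s ≠ 0 := (zero_lt_one.trans_le hs).ne'
  have hx : ∑ i, lam i • w i = s • ∑ i, (lam i / s) • w i := by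
    simp only [Finset.smul_sum, smul_smul, mul_div_cancel₀ _ hs0]
  rw [hx]
  refine (convex_convexHull ℝ T).smul_mem_of_forall_natCast_smul_mem (fun N hN => ?_) hs
  rw [Finset.smul_sum]
  simp_rw [smul_comm (N : ℝ)]
  refine (convex_convexHull ℝ T).sum_mem (fun i _ => by have := hlam0 i; positivity) ?_
    (fun i _ => subset_convexHull ℝ T (hT N hN i))
  rw [← Finset.sum_div, div_self hs0]

end Cone

section LatticeCone

variable {ι κ : Type*}

def nonzeroLatticePoints (C : Set (ι → ℝ)) : Set (ι → ℝ) :=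
  {x ∈ C | ∀ j, ∃ z : ℤ, x j = (z : ℝ)} \ {0}

theorem natCast_smul_mem_nonzeroLatticePoints [Fintype κ] {v : κ → ι → ℤ} (hv : ∀ i, v i ≠ 0)
    {N : ℕ} (hN : 1 ≤ N) (i : κ) :
    (N : ℝ) • (fun j => (v i j : ℝ)) ∈
      nonzeroLatticePoints (nonnegCombinations fun i j => (v i j : ℝ)) := by
  classical
  have hsingle : ∀ j, 0 ≤ (Pi.single i (N : ℝ) : κ → ℝ) j := fun j => by
    rw [Pi.single_apply]; split_ifs <;> positivity
  refine ⟨⟨⟨Pi.single i N, hsingle, by simp [Pi.single_apply]⟩, fun j => ⟨N * v i j, by simp⟩⟩, ?_⟩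
  have hvi : (fun j => (v i j : ℝ)) ≠ 0 := fun h =>
    hv i (funext fun j => by simpa using congrFun h j)
  simp [hvi, Nat.one_le_iff_ne_zero.1 hN]

theorem nonzeroLatticePoints_subset_nonnegCombinationsOneLe [Fintype ι] [DecidableEq ι]
    [Fintype κ] (b : Module.Basis ι ℤ (ι → ℤ)) (f : κ ↪ ι) :
    nonzeroLatticePoints (nonnegCombinations fun i j => (b (f i) j : ℝ)) ⊆
      nonnegCombinationsOneLe fun i j => (b (f i) j : ℝ) := by
  rintro _ ⟨⟨⟨lam, hlam0, rfl⟩, hint⟩, hx0⟩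
  choose z hz using hint
  have hlam := b.coeff_eq_repr_of_sum_smul_eq_intCast f (funext hz)
  refine ⟨lam, hlam0, ?_, rfl⟩
  obtain ⟨i, hi⟩ : ∃ i, lam i ≠ 0 := by
    by_contra! h
    exact hx0 (by simp [h])
  have hrepr : (1 : ℤ) ≤ b.repr z (f i) := by
    have h0 := hlam0 i
    rw [hlam i] at h0 hi
    norm_cast at h0 hi
    omega
  calc (1 : ℝ) ≤ lam i := by rw [hlam i]; exact_mod_cast hrepr
    _ ≤ ∑ j, lam j := Finset.single_le_sum (fun j _ => hlam0 j) (Finset.mem_univ i)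

end LatticeCone

theorem convexHull_nonzero_lattice_points_of_standard_cone_general
    {n k : ℕ} (v : Fin k → Fin n → ℤ)
    (hbasis : ∃ b : Module.Basis (Fin n) ℤ (Fin n → ℤ), ∃ f : Fin k ↪ Fin n, ∀ i, b (f i) = v i)
    (σ : Set (Fin n → ℝ))
    (hσ : σ = {x | ∃ lam : Fin k → ℝ, (∀ i, 0 ≤ lam i) ∧
      x = ∑ i, lam i • fun j => (v i j : ℝ)}) :
    convexHull ℝ ({x ∈ σ | ∀ j, ∃ z : ℤ, x j = (z : ℝ)} \ {0}) =
      {x | ∃ lam : Fin k → ℝ, (∀ i, 0 ≤ lam i) ∧ 1 ≤ ∑ i, lam i ∧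
        x = ∑ i, lam i • fun j => (v i j : ℝ)} := by
  obtain ⟨b, f, hbf⟩ := hbasis
  obtain rfl : v = fun i => b (f i) := funext fun i => (hbf i).symm
  subst hσ
  exact subset_antisymm
    (convexHull_min (nonzeroLatticePoints_subset_nonnegCombinationsOneLe b f)
      (convex_nonnegCombinationsOneLe _))
    (nonnegCombinationsOneLe_subset_convexHull fun N hN i =>
      natCast_smul_mem_nonzeroLatticePoints (fun i => b.ne_zero (f i)) hN i)

/-- The Claim in the proof of Lemma 1.15(3): if `v₁, …, v_k ∈ ℤ^n` are part of a `ℤ`-basis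
of `ℤ^n` and `σ = {Σ λᵢ vᵢ : λᵢ ≥ 0} ⊆ ℝ^n` is the cone they generate, then the convex hull
of the nonzero lattice points of `σ` is `{Σ λᵢ vᵢ : λᵢ ≥ 0, Σ λᵢ ≥ 1}`. -/
theorem convexHull_nonzero_lattice_points_of_standard_cone
    {n k : ℕ} (hk : 1 ≤ k) (v : Fin k → Fin n → ℤ)
    (hbasis : ∃ b : Module.Basis (Fin n) ℤ (Fin n → ℤ), ∃ f : Fin k ↪ Fin n, ∀ i, b (f i) = v i)
    (σ : Set (Fin n → ℝ))
    (hσ : σ = {x | ∃ lam : Fin k → ℝ, (∀ i, 0 ≤ lam i) ∧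
      x = ∑ i, lam i • fun j => (v i j : ℝ)}) :
    convexHull ℝ ({x ∈ σ | ∀ j, ∃ z : ℤ, x j = (z : ℝ)} \ {0}) =
      {x | ∃ lam : Fin k → ℝ, (∀ i, 0 ≤ lam i) ∧ 1 ≤ ∑ i, lam i ∧
        x = ∑ i, lam i • fun j => (v i j : ℝ)} :=
  convexHull_nonzero_lattice_points_of_standard_cone_general v hbasis σ hσ
end

section
/- Let E be a real normed vector space of finite dimension n ≥ 1 and let K be a simplicial complex in E with finitely many faces whose underlying space ⋃_{s ∈ K.faces} convexHull(s) equals a compact convex set P with nonempty interior. Then Σ_{s ∈ K.faces, convexHull(s) ⊄ frontier(P)} (−1)^{card(s) − 1} = (−1)^n, i.e., the alternating sum of (−1)^{dim} over all faces of K not contained in the boundary of P equals (−1)^{dim P}. -/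
/-!
Choose a point `q` in the interior of `P` outside the affine spans of all faces of dimension
`< n`. For each `n`-simplex `σ` of `K`, let `σ⁺ ⊆ σ` be the set of vertices at which the
barycentric coordinate of `q` is positive. A face `s` satisfies `σ⁺ ⊆ s ⊆ σ` exactly when `σ`
contains the points just beyond a relative-interior point of `s` on the ray from `q`; hence
every face not in the boundary of `P` lies in exactly one such interval, and boundary faces lie
in none. The alternating sum over the Boolean interval `[σ⁺, σ]` vanishes unless `σ⁺ = σ`, i.e.
unless `q ∈ σ`, which holds for exactly one `σ`.
-/

open Finset Filter Topology

namespace Finset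

theorem sum_Icc_neg_one_pow_card_sub_one {α : Type*} [DecidableEq α] {A σ : Finset α}
    (hA : A.Nonempty) (hAσ : A ⊆ σ) :
    ∑ s ∈ Icc A σ, (-1 : ℤ) ^ (#s - 1) = if A = σ then (-1) ^ (#σ - 1) else 0 := by
  have hdisj (u) (hu : u ∈ (σ \ A).powerset) : Disjoint A u :=
    disjoint_sdiff.mono_right (mem_powerset.mp hu)
  have hsign (u) (hu : u ∈ (σ \ A).powerset) :
      (-1 : ℤ) ^ (#(A ∪ u) - 1) = (-1) ^ (#A - 1) * (-1) ^ #u := by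
    rw [card_union_of_disjoint (hdisj u hu), ← pow_add]
    congr 1
    have := hA.card_pos
    omega
  rw [Icc_eq_image_powerset hAσ, sum_image fun u hu v hv huv => by
      simpa [union_sdiff_cancel_left (hdisj u hu), union_sdiff_cancel_left (hdisj v hv)]
        using congrArg (· \ A) huv,
    sum_congr rfl hsign, ← mul_sum, sum_powerset_neg_one_pow_card]
  by_cases h : A = σ
  · simp [h]
  · simpa [h] using fun hσA => h (hAσ.antisymm hσA)

theorem sum_filter_eq_sum_sum_filter {ι κ M : Type*} [AddCommMonoid M] {S : Finset ι}
    {T : Finset κ} {p : ι → Prop} [DecidablePred p] {r : ι → κ → Prop} [∀ i j, Decidable (r i j)]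
    (h : ∀ i ∈ S, #{j ∈ T | r i j} = if p i then 1 else 0) (f : ι → M) :
    ∑ i ∈ S with p i, f i = ∑ j ∈ T, ∑ i ∈ S with r i j, f i := by
  simp_rw [sum_filter]
  rw [sum_comm, sum_congr rfl fun i hi => ?_]
  rw [← sum_filter, sum_const, h i hi]
  split_ifs <;> simp

end Finset

section Barycentric

variable {V : Type*} [AddCommGroup V] [Module ℝ V]

structure IsBarycentricWeights (s : Finset V) (w : V → ℝ) (x : V) : Prop where
  sum_eq_one : ∑ v ∈ s, w v = 1
  sum_smul_eq : ∑ v ∈ s, w v • v = x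

namespace IsBarycentricWeights

variable {s t : Finset V} {w w' : V → ℝ} {x q : V}

theorem eq_of_affineIndependent (hs : AffineIndependent ℝ ((↑) : s → V))
    (hw : IsBarycentricWeights s w x) (hw' : IsBarycentricWeights s w' x) :
    ∀ v ∈ s, w v = w' v :=
  hs.eq_of_sum_eq_sum_subtype (hw.sum_eq_one.trans hw'.sum_eq_one.symm)
    (hw.sum_smul_eq.trans hw'.sum_smul_eq.symm)

theorem mem_convexHull (hw : IsBarycentricWeights s w x) (hw0 : ∀ v ∈ s, 0 ≤ w v) :
    x ∈ convexHull ℝ (s : Set V) :=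
  mem_convexHull'.mpr ⟨w, hw0, hw.sum_eq_one, hw.sum_smul_eq⟩

theorem nonempty (hw : IsBarycentricWeights s w x) : s.Nonempty :=
  nonempty_of_sum_ne_zero (hw.sum_eq_one ▸ one_ne_zero)

theorem indicator [DecidableEq V] (hw : IsBarycentricWeights s w x) (hst : s ⊆ t) :
    IsBarycentricWeights t ((s : Set V).indicator w) x where
  sum_eq_one := by rw [sum_indicator_subset _ hst, hw.sum_eq_one]
  sum_smul_eq := by
    simp only [Set.indicator_apply, mem_coe, ite_smul, zero_smul, sum_ite_mem,
      inter_eq_right.mpr hst, hw.sum_smul_eq]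

theorem erase [DecidableEq V] (hw : IsBarycentricWeights s w x) {v : V} (hv : w v = 0) :
    IsBarycentricWeights (s.erase v) w x where
  sum_eq_one := by rw [sum_erase _ hv, hw.sum_eq_one]
  sum_smul_eq := by rw [sum_erase _ (by rw [hv, zero_smul]), hw.sum_smul_eq]

theorem add_smul_sub (hx : IsBarycentricWeights s w x) (hq : IsBarycentricWeights s w' q)
    (ε : ℝ) :
    IsBarycentricWeights s (fun v => (1 + ε) * w v - ε * w' v) (x + ε • (x - q)) where
  sum_eq_one := by
    rw [sum_sub_distrib, ← mul_sum, ← mul_sum, hx.sum_eq_one, hq.sum_eq_one]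
    ring
  sum_smul_eq := by
    simp_rw [sub_smul, mul_smul]
    rw [sum_sub_distrib, ← smul_sum, ← smul_sum, hx.sum_smul_eq, hq.sum_smul_eq]
    module

end IsBarycentricWeights

theorem Finset.mem_affineSpan_iff_exists_isBarycentricWeights [DecidableEq V] {s : Finset V}
    {x : V} : x ∈ affineSpan ℝ (s : Set V) ↔ ∃ w, IsBarycentricWeights s w x := by
  constructor
  · intro hx
    rw [← Set.image_id (s : Set V)] at hx
    obtain ⟨t, w, hts, hw, rfl⟩ := eq_affineCombination_of_mem_affineSpan_image hx
    refine ⟨_, IsBarycentricWeights.indicator ⟨hw, ?_⟩ (coe_subset.mp hts)⟩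
    simp [t.affineCombination_eq_linear_combination _ _ hw]
  · rintro ⟨w, hw⟩
    have := affineCombination_mem_affineSpan_image hw.sum_eq_one (s' := s)
      (fun _ hv hv' => absurd hv hv') id
    rw [s.affineCombination_eq_linear_combination _ _ hw.sum_eq_one, Set.image_id] at this
    simpa [hw.sum_smul_eq] using this

theorem Finset.exists_isBarycentricWeights_of_mem_convexHull {s : Finset V} {x : V}
    (hx : x ∈ convexHull ℝ (s : Set V)) :
    ∃ w, (∀ v ∈ s, 0 ≤ w v) ∧ IsBarycentricWeights s w x :=
  let ⟨w, hw0, hw1, hwx⟩ := mem_convexHull'.mp hx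
  ⟨w, hw0, hw1, hwx⟩

theorem Finset.Nonempty.exists_isBarycentricWeights_pos {s : Finset V} (hs : s.Nonempty) :
    ∃ w x, (∀ v ∈ s, 0 < w v) ∧ IsBarycentricWeights s w x :=
  ⟨fun _ => (#s : ℝ)⁻¹, _, fun _ _ => by positivity,
    ⟨by simp [hs.card_pos.ne'], rfl⟩⟩

theorem AffineSubspace.mem_of_add_smul_sub_mem {S : AffineSubspace ℝ V} {x q : V} {ε : ℝ}
    (hε : ε ≠ 0) (hx : x ∈ S) (hy : x + ε • (x - q) ∈ S) : q ∈ S := by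
  have := S.smul_vsub_vadd_mem (-ε⁻¹) hy hx hx
  convert this using 1
  simp only [vsub_eq_sub, vadd_eq_add, add_sub_cancel_left, smul_smul, neg_mul,
    inv_mul_cancel₀ hε]
  module

theorem eventually_add_smul_sub_mem_convexHull [DecidableEq V] {s σ : Finset V} {w W : V → ℝ}
    {x q : V} (hsσ : s ⊆ σ) (hpos : ∀ v ∈ s, 0 < w v) (hx : IsBarycentricWeights s w x)
    (hq : IsBarycentricWeights σ W q) (hW : {v ∈ σ | 0 < W v} ⊆ s) :
    ∀ᶠ ε in 𝓝[>] (0 : ℝ), x + ε • (x - q) ∈ convexHull ℝ (σ : Set V) := by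
  have hnonneg : ∀ v ∈ σ, ∀ᶠ ε in 𝓝[>] (0 : ℝ),
      0 ≤ (1 + ε) * (s : Set V).indicator w v - ε * W v := by
    intro v hv
    by_cases hvs : v ∈ s
    · have hlim : Tendsto (fun ε : ℝ => (1 + ε) * (s : Set V).indicator w v - ε * W v)
          (𝓝[>] 0) (𝓝 (w v)) :=
        tendsto_nhdsWithin_of_tendsto_nhds <| Continuous.tendsto' (by fun_prop) _ _
          (by simp [Set.indicator_of_mem (mem_coe.mpr hvs)])
      exact (hlim.eventually_const_lt (hpos v hvs)).mono fun _ => le_of_lt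
    · have hWv : W v ≤ 0 := not_lt.mp fun h => hvs (hW (mem_filter.mpr ⟨hv, h⟩))
      filter_upwards [self_mem_nhdsWithin] with ε (hε : 0 < ε)
      rw [Set.indicator_of_notMem (by simpa using hvs)]
      nlinarith
  filter_upwards [(eventually_all_finset σ).mpr hnonneg] with ε hε
  exact ((hx.indicator hsσ).add_smul_sub hq ε).mem_convexHull hε

theorem filter_pos_subset_of_add_smul_sub_mem_convexHull [DecidableEq V] {s σ : Finset V}
    {w W : V → ℝ} {x q : V} {ε : ℝ} (hσ : AffineIndependent ℝ ((↑) : σ → V)) (hsσ : s ⊆ σ)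
    (hx : IsBarycentricWeights s w x) (hq : IsBarycentricWeights σ W q) (hε : 0 < ε)
    (hy : x + ε • (x - q) ∈ convexHull ℝ (σ : Set V)) : {v ∈ σ | 0 < W v} ⊆ s := by
  obtain ⟨w', hw'0, hw'⟩ := exists_isBarycentricWeights_of_mem_convexHull hy
  intro v hv
  obtain ⟨hvσ, hWv⟩ := mem_filter.mp hv
  by_contra hvs
  have heq := ((hx.indicator hsσ).add_smul_sub hq ε).eq_of_affineIndependent hσ hw' v hvσ
  rw [Set.indicator_of_notMem (by simpa using hvs)] at heq
  nlinarith [hw'0 v hvσ]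

end Barycentric

section Convex

variable {E : Type*} [NormedAddCommGroup E] [NormedSpace ℝ E] {P : Set E}

theorem Convex.mem_interior_of_add_smul_sub_mem (hP : Convex ℝ P) {x q : E} {ε : ℝ}
    (hq : q ∈ interior P) (hε : 0 < ε) (hy : x + ε • (x - q) ∈ P) : x ∈ interior P := by
  have h1ε : 0 < 1 + ε := by linarith
  have hx : (ε / (1 + ε)) • q + (1 / (1 + ε)) • (x + ε • (x - q)) = x := by
    match_scalars
    · field_simp
      ring
    · field_simp
  rw [← hx]
  exact hP.combo_interior_closure_mem_interior hq (subset_closure hy) (by positivity)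
    (by positivity) (by field_simp; ring)

theorem Convex.convexHull_subset_frontier_of_notMem_interior (hP : Convex ℝ P)
    (hint : (interior P).Nonempty) {s : Finset E} {w : E → ℝ} {x : E}
    (hsP : convexHull ℝ (s : Set E) ⊆ P) (hpos : ∀ v ∈ s, 0 < w v)
    (hx : IsBarycentricWeights s w x) (hxP : x ∉ interior P) :
    convexHull ℝ (s : Set E) ⊆ frontier P := by
  obtain ⟨f, hf⟩ := geometric_hahn_banach_open_point hP.interior isOpen_interior hxP
  have hfP : ∀ p ∈ P, f p ≤ f x := by
    have : closure (interior P) ⊆ {p | f p ≤ f x} :=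
      closure_minimal (fun p hp => (hf p hp).le) (isClosed_le f.continuous continuous_const)
    rw [hP.closure_interior_eq_closure_of_nonempty_interior hint] at this
    exact fun p hp => this (subset_closure hp)
  -- `f x` is a positive average of the values `f v ≤ f x`, so they are all equal to it
  have hfv : ∀ v ∈ s, f v = f x := by
    have hsum : ∑ v ∈ s, w v * (f x - f v) = 0 := by
      simp_rw [mul_sub, sum_sub_distrib, ← sum_mul, hx.sum_eq_one, one_mul, ← smul_eq_mul,
        ← map_smul, ← map_sum, hx.sum_smul_eq, sub_self]
    intro v hv
    have := (sum_eq_zero_iff_of_nonneg fun u hu => mul_nonneg (hpos u hu).le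
      (sub_nonneg.mpr (hfP u (hsP (subset_convexHull ℝ _ hu))))).mp hsum v hv
    linarith [(mul_eq_zero.mp this).resolve_left (hpos v hv).ne']
  intro z hz
  obtain ⟨w', -, hw'⟩ := exists_isBarycentricWeights_of_mem_convexHull hz
  have hfz : f z = f x := by
    rw [← hw'.sum_smul_eq, map_sum]
    simp_rw [map_smul, smul_eq_mul]
    rw [sum_congr rfl fun v hv => by rw [hfv v hv], ← sum_mul, hw'.sum_eq_one, one_mul]
  exact ⟨subset_closure (hsP hz), fun hzP => (hf z hzP).ne hfz⟩

end Convex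

namespace Geometry.SimplicialComplex

variable {E : Type*} [NormedAddCommGroup E] [NormedSpace ℝ E] {K : SimplicialComplex ℝ E}

theorem card_le_finrank_add_one [FiniteDimensional ℝ E] {s : Finset E} (hs : s ∈ K.faces) :
    #s ≤ Module.finrank ℝ E + 1 := by
  simpa using (K.indep hs).card_le_finrank_succ.trans
    (Nat.add_le_add_right (Submodule.finrank_le _) 1)

theorem affineSpan_eq_top_iff_card_eq [FiniteDimensional ℝ E] {σ : Finset E}
    (hσ : σ ∈ K.faces) : affineSpan ℝ (σ : Set E) = ⊤ ↔ #σ = Module.finrank ℝ E + 1 := by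
  rw [← Fintype.card_coe, ← (K.indep hσ).affineSpan_eq_top_iff_card_eq_finrank_add_one,
    Subtype.range_coe]

theorem exists_isBarycentricWeights_of_card_eq [FiniteDimensional ℝ E] [DecidableEq E]
    {σ : Finset E} (hσ : σ ∈ K.faces) (hcard : #σ = Module.finrank ℝ E + 1) (y : E) :
    ∃ w, IsBarycentricWeights σ w y := by
  rw [← mem_affineSpan_iff_exists_isBarycentricWeights,
    (affineSpan_eq_top_iff_card_eq hσ).mpr hcard]
  exact AffineSubspace.mem_top _ _ y

theorem subset_of_mem_convexHull [DecidableEq E] {s t : Finset E} (hs : s ∈ K.faces)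
    (ht : t ∈ K.faces) {w : E → ℝ} {x : E} (hpos : ∀ v ∈ s, 0 < w v)
    (hx : IsBarycentricWeights s w x) (hxt : x ∈ convexHull ℝ (t : Set E)) : s ⊆ t := by
  have hxst : x ∈ convexHull ℝ ((s ∩ t : Finset E) : Set E) := by
    rw [coe_inter]
    exact K.inter_subset_convexHull hs ht ⟨hx.mem_convexHull fun v hv => (hpos v hv).le, hxt⟩
  obtain ⟨w', -, hw'⟩ := exists_isBarycentricWeights_of_mem_convexHull hxst
  intro v hv
  by_contra hvt
  have heq := hx.eq_of_affineIndependent (K.indep hs) (hw'.indicator inter_subset_left) v hv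
  rw [Set.indicator_of_notMem (by simp [hvt])] at heq
  exact (hpos v hv).ne' heq

variable (K) in
def IsGeneric (q : E) : Prop :=
  ∀ u ∈ K.faces, #u ≤ Module.finrank ℝ E → q ∉ affineSpan ℝ (u : Set E)

theorem exists_isGeneric_mem [FiniteDimensional ℝ E] (hfin : K.faces.Finite) {U : Set E}
    (hU : IsOpen U) (hne : U.Nonempty) : ∃ q ∈ U, K.IsGeneric q := by
  let S := {u ∈ K.faces | #u ≤ Module.finrank ℝ E}
  have hdense : Dense (⋂ u ∈ S, (affineSpan ℝ (u : Set E) : Set E)ᶜ) := by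
    refine dense_biInter_of_isOpen (fun u _ => (AffineSubspace.closed_of_finiteDimensional
      _).isOpen_compl) (hfin.subset (Set.sep_subset _ _)).countable fun u ⟨hu, hcard⟩ => ?_
    rw [← interior_eq_empty_iff_dense_compl, Set.eq_empty_iff_forall_notMem]
    intro y hy
    have htop : affineSpan ℝ (u : Set E) = ⊤ := by
      simpa using (isOpen_interior.affineSpan_eq_top ⟨y, hy⟩).symm.trans_le
        (affineSpan_mono ℝ interior_subset)
    have := (affineSpan_eq_top_iff_card_eq hu).mp htop
    omega
  obtain ⟨q, hqU, hq⟩ := hdense.inter_open_nonempty U hU hne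
  exact ⟨q, hqU, fun u hu hcard => Set.mem_iInter₂.mp hq u ⟨hu, hcard⟩⟩

namespace IsGeneric

variable [FiniteDimensional ℝ E] {q : E}

theorem card_eq_of_mem_affineSpan (hq : K.IsGeneric q) {u : Finset E} (hu : u ∈ K.faces)
    (hqu : q ∈ affineSpan ℝ (u : Set E)) : #u = Module.finrank ℝ E + 1 :=
  (card_le_finrank_add_one hu).antisymm (not_le.mp fun h => hq u hu (by omega) hqu)

theorem eq_of_mem_affineSpan_inter [DecidableEq E] (hq : K.IsGeneric q) {σ₁ σ₂ : Finset E}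
    (h₁ : σ₁ ∈ K.faces) (h₂ : σ₂ ∈ K.faces) (hne : (σ₁ ∩ σ₂).Nonempty)
    (hqσ : q ∈ affineSpan ℝ ((σ₁ ∩ σ₂ : Finset E) : Set E)) : σ₁ = σ₂ := by
  have hcard := hq.card_eq_of_mem_affineSpan (K.down_closed h₁ inter_subset_left hne) hqσ
  have e₁ := eq_of_subset_of_card_le inter_subset_left (hcard ▸ card_le_finrank_add_one h₁)
  have e₂ := eq_of_subset_of_card_le inter_subset_right (hcard ▸ card_le_finrank_add_one h₂)
  exact e₁.symm.trans e₂

theorem filter_pos_eq_self_iff [DecidableEq E] (hq : K.IsGeneric q) {σ : Finset E}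
    (hσ : σ ∈ K.faces) {W : E → ℝ} (hW : IsBarycentricWeights σ W q) :
    {v ∈ σ | 0 < W v} = σ ↔ q ∈ convexHull ℝ (σ : Set E) := by
  rw [filter_eq_self]
  refine ⟨fun hpos => hW.mem_convexHull fun v hv => (hpos v hv).le, fun hqσ v hv => ?_⟩
  obtain ⟨w, hw0, hw⟩ := exists_isBarycentricWeights_of_mem_convexHull hqσ
  refine (hW.eq_of_affineIndependent (K.indep hσ) hw v hv ▸ hw0 v hv).lt_of_ne' fun hWv => ?_
  -- a vanishing coordinate would put `q` in the affine span of the smaller face `σ.erase v`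
  have hqerase := hW.erase hWv
  have hcard := hq.card_eq_of_mem_affineSpan
    (K.down_closed hσ (erase_subset _ _) hqerase.nonempty)
    (mem_affineSpan_iff_exists_isBarycentricWeights.mpr ⟨W, hqerase⟩)
  rw [card_erase_of_mem hv] at hcard
  have := card_le_finrank_add_one hσ
  omega

theorem eq_of_mem_convexHull [DecidableEq E] (hq : K.IsGeneric q) {σ₁ σ₂ : Finset E}
    (h₁ : σ₁ ∈ K.faces) (h₂ : σ₂ ∈ K.faces) (hq₁ : q ∈ convexHull ℝ (σ₁ : Set E))
    (hq₂ : q ∈ convexHull ℝ (σ₂ : Set E)) : σ₁ = σ₂ := by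
  have hq₁₂ : q ∈ convexHull ℝ ((σ₁ ∩ σ₂ : Finset E) : Set E) :=
    coe_inter σ₁ σ₂ ▸ K.inter_subset_convexHull h₁ h₂ ⟨hq₁, hq₂⟩
  exact hq.eq_of_mem_affineSpan_inter h₁ h₂
    (coe_nonempty.mp (convexHull_nonempty_iff.mp ⟨q, hq₁₂⟩)) (convexHull_subset_affineSpan _ hq₁₂)

theorem exists_mem_convexHull (hq : K.IsGeneric q) (hqK : q ∈ K.space) :
    ∃ σ ∈ K.faces, #σ = Module.finrank ℝ E + 1 ∧ q ∈ convexHull ℝ (σ : Set E) := by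
  obtain ⟨σ, hσ, hqσ⟩ := mem_space_iff.mp hqK
  exact ⟨σ, hσ, hq.card_eq_of_mem_affineSpan hσ (convexHull_subset_affineSpan _ hqσ), hqσ⟩

theorem eq_of_mem_Icc [DecidableEq E] (hq : K.IsGeneric q) {s σ₁ σ₂ : Finset E}
    (h₁ : σ₁ ∈ K.faces) (h₂ : σ₂ ∈ K.faces) {w W₁ W₂ : E → ℝ} {x : E}
    (hpos : ∀ v ∈ s, 0 < w v) (hx : IsBarycentricWeights s w x)
    (hW₁ : IsBarycentricWeights σ₁ W₁ q) (hW₂ : IsBarycentricWeights σ₂ W₂ q)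
    (hs₁ : s ∈ Icc {v ∈ σ₁ | 0 < W₁ v} σ₁) (hs₂ : s ∈ Icc {v ∈ σ₂ | 0 < W₂ v} σ₂) :
    σ₁ = σ₂ := by
  rw [mem_Icc] at hs₁ hs₂
  obtain ⟨ε, ⟨hy₁, hy₂⟩, hε : 0 < ε⟩ :=
    (((eventually_add_smul_sub_mem_convexHull hs₁.2 hpos hx hW₁ hs₁.1).and
      (eventually_add_smul_sub_mem_convexHull hs₂.2 hpos hx hW₂ hs₂.1)).and
      self_mem_nhdsWithin).exists
  have hs : s ⊆ σ₁ ∩ σ₂ := subset_inter hs₁.2 hs₂.2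
  have hy : x + ε • (x - q) ∈ convexHull ℝ ((σ₁ ∩ σ₂ : Finset E) : Set E) := by
    rw [coe_inter]
    exact K.inter_subset_convexHull h₁ h₂ ⟨hy₁, hy₂⟩
  have hx' : x ∈ convexHull ℝ ((σ₁ ∩ σ₂ : Finset E) : Set E) :=
    convexHull_mono (coe_subset.mpr hs) (hx.mem_convexHull fun v hv => (hpos v hv).le)
  exact hq.eq_of_mem_affineSpan_inter h₁ h₂ (hx.nonempty.mono hs)
    (AffineSubspace.mem_of_add_smul_sub_mem hε.ne' (convexHull_subset_affineSpan _ hx')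
      (convexHull_subset_affineSpan _ hy))

theorem exists_mem_Icc [DecidableEq E] (hq : K.IsGeneric q) (hfin : K.faces.Finite)
    {W : Finset E → E → ℝ}
    (hW : ∀ σ ∈ K.faces, #σ = Module.finrank ℝ E + 1 → IsBarycentricWeights σ (W σ) q)
    {s : Finset E} (hs : s ∈ K.faces) {w : E → ℝ} {x : E} (hpos : ∀ v ∈ s, 0 < w v)
    (hx : IsBarycentricWeights s w x) (hxK : x ∈ interior K.space) :
    ∃ σ ∈ K.faces, #σ = Module.finrank ℝ E + 1 ∧ s ∈ Icc {v ∈ σ | 0 < W σ v} σ := by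
  have hlim : Tendsto (fun ε : ℝ => x + ε • (x - q)) (𝓝[>] 0) (𝓝 x) :=
    tendsto_nhdsWithin_of_tendsto_nhds <| Continuous.tendsto' (by fun_prop) _ _ (by simp)
  have hcover : ∀ᶠ ε in 𝓝[>] (0 : ℝ), ∃ u ∈ K.faces,
      x + ε • (x - q) ∈ convexHull ℝ (u : Set E) :=
    (hlim.eventually (isOpen_interior.mem_nhds hxK)).mono fun _ hy =>
      mem_space_iff.mp (interior_subset hy)
  -- finitely many faces, so one of them is hit for arbitrarily small `ε`
  obtain ⟨u, hu, hfreq⟩ := hfin.frequently_exists.mp hcover.frequently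
  have hxu := (u.finite_toSet.isClosed_convexHull ℝ).mem_of_frequently_of_tendsto hfreq hlim
  have hsu := subset_of_mem_convexHull hs hu hpos hx hxu
  obtain ⟨ε, hy, hε : 0 < ε⟩ := (hfreq.and_eventually self_mem_nhdsWithin).exists
  have hcard := hq.card_eq_of_mem_affineSpan hu <| AffineSubspace.mem_of_add_smul_sub_mem
    hε.ne' (convexHull_subset_affineSpan _ hxu) (convexHull_subset_affineSpan _ hy)
  exact ⟨u, hu, hcard, mem_Icc.mpr ⟨filter_pos_subset_of_add_smul_sub_mem_convexHull
    (K.indep hu) hsu hx (hW u hu hcard) hε hy, hsu⟩⟩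

open scoped Classical in
theorem card_filter_mem_Icc [DecidableEq E] (hq : K.IsGeneric q) (hfin : K.faces.Finite)
    (hconv : Convex ℝ K.space) (hqK : q ∈ interior K.space) {W : Finset E → E → ℝ}
    (hW : ∀ σ ∈ K.faces, #σ = Module.finrank ℝ E + 1 → IsBarycentricWeights σ (W σ) q)
    {T : Finset (Finset E)} (hT : ∀ σ, σ ∈ T ↔ σ ∈ K.faces ∧ #σ = Module.finrank ℝ E + 1)
    {s : Finset E} (hs : s ∈ K.faces) :
    #{σ ∈ T | s ∈ Icc ({v ∈ σ | 0 < W σ v} : Finset E) σ} =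
      if convexHull ℝ (s : Set E) ⊆ frontier K.space then 0 else 1 := by
  obtain ⟨w, x, hpos, hx⟩ := (nonempty_of_mem_faces hs).exists_isBarycentricWeights_pos
  have hxs := hx.mem_convexHull fun v hv => (hpos v hv).le
  split_ifs with hfr
  · refine card_eq_zero.mpr (filter_eq_empty_iff.mpr fun σ hσT hsσ => ?_)
    obtain ⟨hσ, hcard⟩ := (hT σ).mp hσT
    rw [mem_Icc] at hsσ
    obtain ⟨ε, hy, hε : 0 < ε⟩ := ((eventually_add_smul_sub_mem_convexHull hsσ.2 hpos hx
      (hW σ hσ hcard) hsσ.1).and self_mem_nhdsWithin).exists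
    exact (hfr hxs).2
      (hconv.mem_interior_of_add_smul_sub_mem hqK hε (convexHull_subset_space hσ hy))
  · have hxK : x ∈ interior K.space := by_contra fun h => hfr <|
      hconv.convexHull_subset_frontier_of_notMem_interior ⟨q, hqK⟩
        (convexHull_subset_space hs) hpos hx h
    obtain ⟨σ, hσ, hcard, hsσ⟩ := hq.exists_mem_Icc hfin hW hs hpos hx hxK
    refine card_eq_one.mpr ⟨σ, eq_singleton_iff_unique_mem.mpr
      ⟨mem_filter.mpr ⟨(hT σ).mpr ⟨hσ, hcard⟩, hsσ⟩, fun σ' hσ' => ?_⟩⟩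
    obtain ⟨hσ'T, hsσ'⟩ := mem_filter.mp hσ'
    obtain ⟨hσ', hcard'⟩ := (hT σ').mp hσ'T
    exact hq.eq_of_mem_Icc hσ' hσ hpos hx (hW σ' hσ' hcard') (hW σ hσ hcard) hsσ' hsσ

open scoped Classical in
theorem sum_filter_mem_Icc [DecidableEq E] (hq : K.IsGeneric q) (hfin : K.faces.Finite)
    {σ : Finset E} (hσ : σ ∈ K.faces) (hcard : #σ = Module.finrank ℝ E + 1) {W : E → ℝ}
    (hW : IsBarycentricWeights σ W q) :
    ∑ s ∈ hfin.toFinset with s ∈ Icc {v ∈ σ | 0 < W v} σ, (-1 : ℤ) ^ (#s - 1) =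
      if q ∈ convexHull ℝ (σ : Set E) then (-1) ^ Module.finrank ℝ E else 0 := by
  have hpos : {v ∈ σ | 0 < W v}.Nonempty := by
    obtain ⟨v, hv, hWv⟩ := exists_lt_of_sum_lt (s := σ) (f := 0) (g := W)
      (by simp [hW.sum_eq_one])
    exact ⟨v, mem_filter.mpr ⟨hv, hWv⟩⟩
  have hfaces :
      {s ∈ hfin.toFinset | s ∈ Icc {v ∈ σ | 0 < W v} σ} = Icc {v ∈ σ | 0 < W v} σ :=
    filter_mem_eq_inter.trans <| inter_eq_right.mpr fun s hs => hfin.mem_toFinset.mpr <|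
      K.down_closed hσ (mem_Icc.mp hs).2 (hpos.mono (mem_Icc.mp hs).1)
  rw [hfaces, sum_Icc_neg_one_pow_card_sub_one hpos (filter_subset _ _), hcard,
    Nat.add_sub_cancel]
  exact if_congr (hq.filter_pos_eq_self_iff hσ hW) rfl rfl

end IsGeneric

end Geometry.SimplicialComplex

open Geometry.SimplicialComplex

open Classical in
theorem alternating_sum_faces_not_in_boundary_general
    {E : Type*} [NormedAddCommGroup E] [NormedSpace ℝ E] [FiniteDimensional ℝ E]
    {n : ℕ} (hrank : Module.finrank ℝ E = n)
    (K : Geometry.SimplicialComplex ℝ E) (hfin : K.faces.Finite)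
    (P : Set E) (hP : P = ⋃ s ∈ K.faces, convexHull ℝ (↑s : Set E))
    (hconv : Convex ℝ P) (hint : (interior P).Nonempty) :
    ∑ s ∈ hfin.toFinset.filter
        (fun s : Finset E => ¬ convexHull ℝ (↑s : Set E) ⊆ frontier P),
      (-1 : ℤ) ^ (s.card - 1) = (-1) ^ n := by
  change P = K.space at hP
  subst hrank hP
  obtain ⟨q, hqK, hq⟩ := exists_isGeneric_mem hfin isOpen_interior hint
  have hW (σ : Finset E) : ∃ W : E → ℝ, σ ∈ K.faces → #σ = Module.finrank ℝ E + 1 →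
      IsBarycentricWeights σ W q := by
    by_cases hσ : σ ∈ K.faces ∧ #σ = Module.finrank ℝ E + 1
    · obtain ⟨W, hW⟩ := exists_isBarycentricWeights_of_card_eq hσ.1 hσ.2 q
      exact ⟨W, fun _ _ => hW⟩
    · exact ⟨0, fun h₁ h₂ => absurd ⟨h₁, h₂⟩ hσ⟩
  choose W hW using hW
  let T := {σ ∈ hfin.toFinset | #σ = Module.finrank ℝ E + 1}
  have hT (σ : Finset E) : σ ∈ T ↔ σ ∈ K.faces ∧ #σ = Module.finrank ℝ E + 1 := by simp [T]
  obtain ⟨σq, hσq, hcardq, hqσq⟩ := hq.exists_mem_convexHull (interior_subset hqK)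
  rw [sum_filter_eq_sum_sum_filter (T := T) (r := fun s σ => s ∈ Icc {v ∈ σ | 0 < W σ v} σ)
      fun s hs => by
        rw [hq.card_filter_mem_Icc hfin hconv hqK hW hT (hfin.mem_toFinset.mp hs), ite_not],
    sum_eq_single_of_mem σq ((hT σq).mpr ⟨hσq, hcardq⟩) fun σ hσT hne => ?_]
  · rw [hq.sum_filter_mem_Icc hfin hσq hcardq (hW σq hσq hcardq), if_pos hqσq]
  · obtain ⟨hσ, hcard⟩ := (hT σ).mp hσT
    rw [hq.sum_filter_mem_Icc hfin hσ hcard (hW σ hσ hcard),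
      if_neg fun hqσ => hne (hq.eq_of_mem_convexHull hσ hσq hqσ hqσq)]

open Classical in
/-- Lemma 5.2(2): if a finite simplicial complex `K` in an `n`-dimensional real normed
space (`n ≥ 1`) has underlying space a compact convex set `P` with nonempty interior, then
the alternating sum of `(-1)^dim` over all faces of `K` not contained in the boundary of
`P` equals `(-1)^n`. -/
theorem alternating_sum_faces_not_in_boundary
    {E : Type*} [NormedAddCommGroup E] [NormedSpace ℝ E] [FiniteDimensional ℝ E]
    {n : ℕ} (hn : 1 ≤ n) (hrank : Module.finrank ℝ E = n)
    (K : Geometry.SimplicialComplex ℝ E) (hfin : K.faces.Finite)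
    (P : Set E) (hP : P = ⋃ s ∈ K.faces, convexHull ℝ (↑s : Set E))
    (hcompact : IsCompact P) (hconv : Convex ℝ P) (hint : (interior P).Nonempty) :
    ∑ s ∈ hfin.toFinset.filter
        (fun s : Finset E => ¬ convexHull ℝ (↑s : Set E) ⊆ frontier P),
      (-1 : ℤ) ^ (s.card - 1) = (-1) ^ n :=
  alternating_sum_faces_not_in_boundary_general hrank K hfin P hP hconv hint
end
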